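/- Let $d \ge 1$ and $p \in [1,\infty)$. Let $\nu : \mathbb{R}^d \to [0,\infty)$ be measurable and radial (i.e. $\nu(h) = \rho(|h|)$ for some measurable $\rho$) with $\int_{\mathbb{R}^d}(1 \wedge |h|^p)\,\nu(h)\,dh = 1$. For $\varepsilon \in (0,1]$ define $\nu_\varepsilon(h) = \varepsilon^{-d-p}\,\nu(h/\varepsilon)$ if $|h| \le \varepsilon$; $\nu_\varepsilon(h) = \varepsilon^{-d}\,|h|^{-p}\,\nu(h/\varepsilon)$ if $\varepsilon < |h| \le 1$; and $\nu_\varepsilon(h) = \varepsilon^{-d}\,\nu(h/\varepsilon)$ if $|h| > 1$. Then: (i) for every $\varepsilon \in (0,1]$, $\int_{\mathbb{R}^d}(1 \wedge |h|^p)\,\nu_\varepsilon(h)\,dh = 1$; and (ii) for every $\delta > 0$, $\int_{\{|h| > \delta\}} \nu_\varepsilon(h)\,dh \to 0$ as $\varepsilon \to 0^+$. In particular $(\nu_\varepsilon)_\varepsilon$ is a $p$-Lévy approximation of the unity. -/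

import Mathlib

open MeasureTheory Filter
open scoped ENNReal Topology

/-- A family `(ν_ε)_{ε∈(0,1)}` of measurable functions `ℝ^d → [0,∞)` is a `p`-Lévy
approximation of the unity: each `ν_ε` is radial with
`∫ (1 ∧ |h|^p) ν_ε(h) dh = 1`, and for every `δ > 0`,
`∫_{|h|>δ} ν_ε(h) dh → 0` as `ε → 0⁺`. -/
def IsPLevyApproxUnity (d : ℕ) (p : ℝ)
    (ν : ℝ → EuclideanSpace ℝ (Fin d) → ℝ) : Prop :=
  (∀ ε ∈ Set.Ioo (0 : ℝ) 1,
    Measurable (ν ε) ∧ (∀ h, 0 ≤ ν ε h) ∧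
    (∀ h h' : EuclideanSpace ℝ (Fin d), ‖h‖ = ‖h'‖ → ν ε h = ν ε h') ∧
    ∫⁻ h : EuclideanSpace ℝ (Fin d), ENNReal.ofReal (min 1 (‖h‖ ^ p) * ν ε h) = 1) ∧
  (∀ δ : ℝ, 0 < δ →
    Tendsto (fun ε => ∫⁻ h in {h : EuclideanSpace ℝ (Fin d) | δ < ‖h‖},
        ENNReal.ofReal (ν ε h))
      (𝓝[>] (0 : ℝ)) (𝓝 0))

/-! The weighted kernel `(1 ∧ |h|^p) ν_ε(h)` is exactly the mass-preserving dilation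
`ε^{-d} F(h/ε)` of `F(g) = (1 ∧ |g|^p) ρ(|g|)`, which gives (i). Away from the origin the weight
`1 ∧ |h|^p` is bounded below by `1 ∧ δ^p`, so `∫_{|h|>δ} ν_ε` is at most a constant times
`∫_{|g|>δ/ε} F(g)`, the tail of an integrable function beyond a radius tending to infinity. -/

open Module

section Dilation

variable {E : Type*} [NormedAddCommGroup E] [NormedSpace ℝ E] [MeasurableSpace E] [BorelSpace E]
  [FiniteDimensional ℝ E] (μ : Measure E) [μ.IsAddHaarMeasure]

theorem lintegral_rpow_mul_comp_inv_smul {ε : ℝ} (hε : 0 < ε) (f : E → ℝ≥0∞) :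
    ∫⁻ x, ENNReal.ofReal (ε ^ (-(finrank ℝ E : ℝ))) * f (ε⁻¹ • x) ∂μ = ∫⁻ x, f x ∂μ := by
  let e : E ≃ᵐ E := (Homeomorph.smul (Units.mk0 ε⁻¹ (inv_ne_zero hε.ne'))).toMeasurableEquiv
  have hmap : μ.map e = ENNReal.ofReal (ε ^ finrank ℝ E) • μ := by
    rw [show ⇑e = (ε⁻¹ • ·) from rfl, Measure.map_addHaar_smul μ (inv_ne_zero hε.ne'), inv_pow,
      inv_inv, abs_of_pos (pow_pos hε _)]
  rw [lintegral_const_mul' _ _ ENNReal.ofReal_ne_top]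
  change _ * ∫⁻ x, f (e x) ∂μ = _
  rw [← lintegral_map_equiv, hmap, lintegral_smul_measure, smul_eq_mul, ← mul_assoc,
    ← ENNReal.ofReal_mul (by positivity), Real.rpow_neg hε.le, Real.rpow_natCast,
    inv_mul_cancel₀ (pow_ne_zero _ hε.ne'), ENNReal.ofReal_one, one_mul]

theorem setLIntegral_rpow_mul_comp_inv_smul {ε : ℝ} (hε : 0 < ε) (f : E → ℝ≥0∞) {s : Set E}
    (hs : MeasurableSet s) :
    ∫⁻ x in (ε⁻¹ • ·) ⁻¹' s, ENNReal.ofReal (ε ^ (-(finrank ℝ E : ℝ))) * f (ε⁻¹ • x) ∂μ =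
      ∫⁻ x in s, f x ∂μ := by
  rw [← lintegral_indicator (hs.preimage (measurable_const_smul _)), ← lintegral_indicator hs,
    ← lintegral_rpow_mul_comp_inv_smul μ hε (s.indicator f)]
  congr with x
  by_cases hx : ε⁻¹ • x ∈ s <;> simp [hx]

end Dilation

theorem measurableSet_lt_norm {E : Type*} [SeminormedAddCommGroup E] [MeasurableSpace E]
    [OpensMeasurableSpace E] (R : ℝ) : MeasurableSet {x : E | R < ‖x‖} :=
  measurableSet_lt measurable_const continuous_norm.measurable

theorem tendsto_setLIntegral_lt_norm_atTop {E : Type*} [SeminormedAddCommGroup E]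
    [MeasurableSpace E] [OpensMeasurableSpace E] (μ : Measure E) {f : E → ℝ≥0∞}
    (hf : ∫⁻ x, f x ∂μ ≠ ∞) :
    Tendsto (fun R : ℝ => ∫⁻ x in {x | R < ‖x‖}, f x ∂μ) atTop (𝓝 0) := by
  have hempty : ⋂ R : ℝ, {x : E | R < ‖x‖} = ∅ :=
    Set.iInter_eq_empty_iff.2 fun x => ⟨‖x‖, (lt_irrefl ‖x‖).elim⟩
  have := tendsto_measure_iInter_atTop (μ := μ.withDensity f)
    (fun R => (measurableSet_lt_norm R).nullMeasurableSet) (fun R₁ R₂ hR x hx => hR.trans_lt hx)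
    ⟨0, by
      rw [withDensity_apply _ (measurableSet_lt_norm 0)]
      exact ne_top_of_le_ne_top hf (setLIntegral_le_lintegral _ _)⟩
  simpa [hempty, Function.comp_def, withDensity_apply _ (measurableSet_lt_norm _)] using this

theorem one_le_max_one_rpow_neg_mul_min_one_rpow {p δ r : ℝ} (hp : 0 ≤ p) (hδ : 0 < δ)
    (hδr : δ < r) : 1 ≤ max 1 (δ ^ (-p)) * min 1 (r ^ p) := by
  rcases le_total 1 (r ^ p) with h | h
  · rw [min_eq_left h, mul_one]
    exact le_max_left _ _
  · calc (1 : ℝ) = δ ^ (-p) * δ ^ p := by rw [Real.rpow_neg hδ.le, inv_mul_cancel₀ (by positivity)]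
      _ ≤ max 1 (δ ^ (-p)) * min 1 (r ^ p) := by
        rw [min_eq_right h]
        gcongr
        exact le_max_right _ _

/-- The radial profile of `ν_ε`: `ν_ε(h) = rescaledProfile d p ρ ε |h|`. -/
noncomputable def rescaledProfile (s p : ℝ) (ρ : ℝ → ℝ) (ε r : ℝ) : ℝ :=
  if r ≤ ε then ε ^ (-s - p) * ρ (r / ε)
  else if r ≤ 1 then ε ^ (-s) * r ^ (-p) * ρ (r / ε)
  else ε ^ (-s) * ρ (r / ε)

section RescaledProfile

variable {s p ε : ℝ} {ρ : ℝ → ℝ}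

theorem measurable_rescaledProfile (hρ : Measurable ρ) :
    Measurable (rescaledProfile s p ρ ε) :=
  Measurable.ite measurableSet_Iic (measurable_const.mul (hρ.comp (measurable_id.div_const ε))) <|
    Measurable.ite measurableSet_Iic
      ((measurable_const.mul (measurable_id.pow_const _)).mul (hρ.comp (measurable_id.div_const ε)))
      (measurable_const.mul (hρ.comp (measurable_id.div_const ε)))

theorem rescaledProfile_nonneg (hρ0 : ∀ t, 0 ≤ ρ t) (hε : 0 < ε) {r : ℝ} (hr : 0 ≤ r) :
    0 ≤ rescaledProfile s p ρ ε r := by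
  unfold rescaledProfile
  split_ifs <;> have := hρ0 (r / ε) <;> positivity

theorem min_one_rpow_mul_rescaledProfile (hp : 0 ≤ p) (hε : 0 < ε) (hε1 : ε ≤ 1) {r : ℝ}
    (hr : 0 ≤ r) :
    min 1 (r ^ p) * rescaledProfile s p ρ ε r =
      ε ^ (-s) * (min 1 ((r / ε) ^ p) * ρ (r / ε)) := by
  unfold rescaledProfile
  split_ifs with hrε hr1
  · rw [min_eq_right (Real.rpow_le_one hr (hrε.trans hε1) hp),
      min_eq_right (Real.rpow_le_one (by positivity) ((div_le_one hε).2 hrε) hp),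
      Real.div_rpow hr hε.le, sub_eq_add_neg, Real.rpow_add hε, Real.rpow_neg hε.le p]
    ring
  · have hεr : ε < r := not_le.1 hrε
    rw [min_eq_right (Real.rpow_le_one hr hr1 hp),
      min_eq_left (Real.one_le_rpow ((one_lt_div hε).2 hεr).le hp), Real.rpow_neg hr]
    have : r ^ p ≠ 0 := (Real.rpow_pos_of_pos (hε.trans hεr) p).ne'
    field_simp
  · rw [min_eq_left (Real.one_le_rpow (not_le.1 hr1).le hp),
      min_eq_left (Real.one_le_rpow ((one_lt_div hε).2 (not_le.1 hrε)).le hp)]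
    ring

theorem ofReal_min_one_rpow_mul_rescaledProfile (hp : 0 ≤ p) (hε : ε ∈ Set.Ioc 0 1) {E : Type*}
    [SeminormedAddCommGroup E] [NormedSpace ℝ E] (x : E) :
    ENNReal.ofReal (min 1 (‖x‖ ^ p) * rescaledProfile s p ρ ε ‖x‖) =
      ENNReal.ofReal (ε ^ (-s)) *
        ENNReal.ofReal (min 1 (‖ε⁻¹ • x‖ ^ p) * ρ ‖ε⁻¹ • x‖) := by
  rw [min_one_rpow_mul_rescaledProfile hp hε.1 hε.2 (norm_nonneg x),
    ENNReal.ofReal_mul (by positivity [hε.1]), norm_smul,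
    Real.norm_of_nonneg (inv_nonneg.2 hε.1.le), inv_mul_eq_div]

end RescaledProfile

section RescaledKernel

variable {E : Type*} [NormedAddCommGroup E] [NormedSpace ℝ E] [MeasurableSpace E] [BorelSpace E]
  [FiniteDimensional ℝ E] (μ : Measure E) [μ.IsAddHaarMeasure] {p ε : ℝ} {ρ : ℝ → ℝ}

theorem lintegral_min_one_rpow_mul_rescaledProfile (hp : 0 ≤ p) (hε : ε ∈ Set.Ioc 0 1) :
    ∫⁻ x, ENNReal.ofReal (min 1 (‖x‖ ^ p) * rescaledProfile (finrank ℝ E) p ρ ε ‖x‖) ∂μ =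
      ∫⁻ x, ENNReal.ofReal (min 1 (‖x‖ ^ p) * ρ ‖x‖) ∂μ := by
  simp_rw [ofReal_min_one_rpow_mul_rescaledProfile hp hε]
  exact lintegral_rpow_mul_comp_inv_smul μ hε.1 fun x => ENNReal.ofReal (min 1 (‖x‖ ^ p) * ρ ‖x‖)

theorem setLIntegral_rescaledProfile_le (hp : 0 ≤ p) (hρ0 : ∀ t, 0 ≤ ρ t) {δ : ℝ} (hδ : 0 < δ)
    (hε : ε ∈ Set.Ioc 0 1) :
    ∫⁻ x in {x | δ < ‖x‖}, ENNReal.ofReal (rescaledProfile (finrank ℝ E) p ρ ε ‖x‖) ∂μ ≤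
      ENNReal.ofReal (max 1 (δ ^ (-p))) *
        ∫⁻ x in {x | δ / ε < ‖x‖}, ENNReal.ofReal (min 1 (‖x‖ ^ p) * ρ ‖x‖) ∂μ := by
  have hpre : (ε⁻¹ • ·) ⁻¹' {x : E | δ / ε < ‖x‖} = {x | δ < ‖x‖} := by
    ext x
    simp only [Set.mem_preimage, Set.mem_ofPred_eq, norm_smul,
      Real.norm_of_nonneg (inv_nonneg.2 hε.1.le), inv_mul_eq_div]
    exact div_lt_div_iff_of_pos_right hε.1
  calc ∫⁻ x in {x | δ < ‖x‖}, ENNReal.ofReal (rescaledProfile (finrank ℝ E) p ρ ε ‖x‖) ∂μ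
      ≤ ∫⁻ x in {x | δ < ‖x‖}, ENNReal.ofReal (max 1 (δ ^ (-p))) *
          ENNReal.ofReal (min 1 (‖x‖ ^ p) * rescaledProfile (finrank ℝ E) p ρ ε ‖x‖) ∂μ := by
        refine setLIntegral_mono' (measurableSet_lt_norm δ) fun x hx => ?_
        rw [← ENNReal.ofReal_mul (by positivity), ← mul_assoc]
        exact ENNReal.ofReal_le_ofReal <| le_mul_of_one_le_left
          (rescaledProfile_nonneg hρ0 hε.1 (norm_nonneg x))
          (one_le_max_one_rpow_neg_mul_min_one_rpow hp hδ hx)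
    _ = ENNReal.ofReal (max 1 (δ ^ (-p))) *
          ∫⁻ x in {x | δ / ε < ‖x‖}, ENNReal.ofReal (min 1 (‖x‖ ^ p) * ρ ‖x‖) ∂μ := by
        rw [lintegral_const_mul' _ _ ENNReal.ofReal_ne_top, ← hpre,
          ← setLIntegral_rpow_mul_comp_inv_smul μ hε.1 _ (measurableSet_lt_norm _)]
        simp_rw [ofReal_min_one_rpow_mul_rescaledProfile hp hε]

theorem tendsto_setLIntegral_rescaledProfile (hp : 0 ≤ p) (hρ0 : ∀ t, 0 ≤ ρ t)
    (hfin : ∫⁻ x, ENNReal.ofReal (min 1 (‖x‖ ^ p) * ρ ‖x‖) ∂μ ≠ ∞) {δ : ℝ} (hδ : 0 < δ) :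
    Tendsto (fun ε => ∫⁻ x in {x | δ < ‖x‖},
        ENNReal.ofReal (rescaledProfile (finrank ℝ E) p ρ ε ‖x‖) ∂μ) (𝓝[>] 0) (𝓝 0) := by
  have hlim : Tendsto (fun ε => ENNReal.ofReal (max 1 (δ ^ (-p))) *
      ∫⁻ x in {x | δ / ε < ‖x‖}, ENNReal.ofReal (min 1 (‖x‖ ^ p) * ρ ‖x‖) ∂μ)
      (𝓝[>] 0) (𝓝 0) := by
    simpa only [mul_zero, Function.comp_def, div_eq_mul_inv] using ENNReal.Tendsto.const_mul
      ((tendsto_setLIntegral_lt_norm_atTop μ hfin).comp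
        (tendsto_inv_nhdsGT_zero.const_mul_atTop hδ)) (Or.inr ENNReal.ofReal_ne_top)
  refine tendsto_of_tendsto_of_tendsto_of_le_of_le' tendsto_const_nhds hlim
    (.of_forall fun _ => zero_le) ?_
  filter_upwards [Ioc_mem_nhdsGT zero_lt_one] with ε hε
  exact setLIntegral_rescaledProfile_le μ hp hρ0 hδ hε

end RescaledKernel

theorem stmt_17_general (d : ℕ) (p : ℝ) (hp : 1 ≤ p)
    (ρ : ℝ → ℝ) (hρ : Measurable ρ) (hρ0 : ∀ t, 0 ≤ ρ t)
    (hnorm : ∫⁻ h : EuclideanSpace ℝ (Fin d),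
      ENNReal.ofReal (min 1 (‖h‖ ^ p) * ρ ‖h‖) = 1)
    (νe : ℝ → EuclideanSpace ℝ (Fin d) → ℝ)
    (hνe : ∀ ε ∈ Set.Ioc (0 : ℝ) 1, ∀ h : EuclideanSpace ℝ (Fin d),
      νe ε h =
        if ‖h‖ ≤ ε then ε ^ (-(d : ℝ) - p) * ρ (‖h‖ / ε)
        else if ‖h‖ ≤ 1 then ε ^ (-(d : ℝ)) * ‖h‖ ^ (-p) * ρ (‖h‖ / ε)
        else ε ^ (-(d : ℝ)) * ρ (‖h‖ / ε)) :
    (∀ ε ∈ Set.Ioc (0 : ℝ) 1,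
      ∫⁻ h : EuclideanSpace ℝ (Fin d),
        ENNReal.ofReal (min 1 (‖h‖ ^ p) * νe ε h) = 1) ∧
    (∀ δ : ℝ, 0 < δ →
      Tendsto (fun ε => ∫⁻ h in {h : EuclideanSpace ℝ (Fin d) | δ < ‖h‖},
          ENNReal.ofReal (νe ε h))
        (𝓝[>] (0 : ℝ)) (𝓝 0)) ∧
    IsPLevyApproxUnity d p νe := by
  have hp0 : 0 ≤ p := zero_le_one.trans hp
  have hνe' : ∀ ε ∈ Set.Ioc (0 : ℝ) 1,
      νe ε = fun h => rescaledProfile (finrank ℝ (EuclideanSpace ℝ (Fin d))) p ρ ε ‖h‖ := by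
    intro ε hε
    funext h
    rw [hνe ε hε h, finrank_euclideanSpace_fin]
    rfl
  have hmass : ∀ ε ∈ Set.Ioc (0 : ℝ) 1,
      ∫⁻ h, ENNReal.ofReal (min 1 (‖h‖ ^ p) * νe ε h) = 1 := fun ε hε => by
    rw [hνe' ε hε, lintegral_min_one_rpow_mul_rescaledProfile volume hp0 hε, hnorm]
  have htail : ∀ δ : ℝ, 0 < δ → Tendsto (fun ε => ∫⁻ h in {h | δ < ‖h‖}, ENNReal.ofReal (νe ε h))
      (𝓝[>] (0 : ℝ)) (𝓝 0) := fun δ hδ =>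
    (tendsto_setLIntegral_rescaledProfile volume hp0 hρ0 (hnorm ▸ ENNReal.one_ne_top) hδ).congr'
      (by filter_upwards [Ioc_mem_nhdsGT zero_lt_one] with ε hε; rw [hνe' ε hε])
  refine ⟨hmass, htail, fun ε hε => ?_, htail⟩
  have hε' : ε ∈ Set.Ioc (0 : ℝ) 1 := Set.Ioo_subset_Ioc_self hε
  refine ⟨?_, fun h => ?_, fun h h' hhh => ?_, hmass ε hε'⟩ <;> rw [hνe' ε hε']
  · exact (measurable_rescaledProfile hρ).comp measurable_norm
  · exact rescaledProfile_nonneg hρ0 hε.1 (norm_nonneg h)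
  · simp only [hhh]

/-- The rescaling of a normalized radial `p`-Lévy kernel
`ν(h) = ρ(|h|)` (with the three-regime rescaling `ν_ε`) satisfies:
(i) `∫ (1 ∧ |h|^p) ν_ε(h) dh = 1` for every `ε ∈ (0,1]`;
(ii) `∫_{|h|>δ} ν_ε(h) dh → 0` as `ε → 0⁺` for every `δ > 0`;
in particular `(ν_ε)` is a `p`-Lévy approximation of the unity. -/
theorem stmt_17 (d : ℕ) (hd : 1 ≤ d) (p : ℝ) (hp : 1 ≤ p)
    (ρ : ℝ → ℝ) (hρ : Measurable ρ) (hρ0 : ∀ t, 0 ≤ ρ t)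
    (hnorm : ∫⁻ h : EuclideanSpace ℝ (Fin d),
      ENNReal.ofReal (min 1 (‖h‖ ^ p) * ρ ‖h‖) = 1)
    (νe : ℝ → EuclideanSpace ℝ (Fin d) → ℝ)
    (hνe : ∀ ε ∈ Set.Ioc (0 : ℝ) 1, ∀ h : EuclideanSpace ℝ (Fin d),
      νe ε h =
        if ‖h‖ ≤ ε then ε ^ (-(d : ℝ) - p) * ρ (‖h‖ / ε)
        else if ‖h‖ ≤ 1 then ε ^ (-(d : ℝ)) * ‖h‖ ^ (-p) * ρ (‖h‖ / ε)
        else ε ^ (-(d : ℝ)) * ρ (‖h‖ / ε)) :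
    (∀ ε ∈ Set.Ioc (0 : ℝ) 1,
      ∫⁻ h : EuclideanSpace ℝ (Fin d),
        ENNReal.ofReal (min 1 (‖h‖ ^ p) * νe ε h) = 1) ∧
    (∀ δ : ℝ, 0 < δ →
      Tendsto (fun ε => ∫⁻ h in {h : EuclideanSpace ℝ (Fin d) | δ < ‖h‖},
          ENNReal.ofReal (νe ε h))
        (𝓝[>] (0 : ℝ)) (𝓝 0)) ∧
    IsPLevyApproxUnity d p νe :=
  stmt_17_general d p hp ρ hρ hρ0 hnorm νe hνe
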